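/- For nonnegative integers n and l: 1/(q;q)_n = sum_{i=0}^n 1/(q;q)_i * [n-i+l choose l]_q * q^{(l+1)i}. -/

import Mathlib

open Finset

variable {F : Type*} [Field F]

/-- `(q;q)_n = (1-q)(1-q^2)...(1-q^n)` -/
def qfac (q : F) (n : ℕ) : F := ∏ j ∈ Finset.range n, (1 - q ^ (j + 1))

/-- `(z;q)_k = (1-z)(1-zq)...(1-zq^{k-1})` -/
def qpoch (z q : F) (k : ℕ) : F := ∏ j ∈ Finset.range k, (1 - z * q ^ j)

/-- Gaussian binomial coefficient `[n choose k]_q` -/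
def qbinom (q : F) (n k : ℕ) : F := qfac q n / (qfac q k * qfac q (n - k))

/-- Sum over weakly increasing `m`-tuples `lo ≤ i_1 ≤ ... ≤ i_m ≤ n` of
`∏_j q^{i_j}/(1-q^{i_j})` (equal to `1` when `m = 0`). -/
def chainSum (q : F) (lo n m : ℕ) : F :=
  ∑ c ∈ Finset.univ.filter (fun c : Fin m → Fin (n + 1) =>
      (∀ j k : Fin m, j ≤ k → c j ≤ c k) ∧ ∀ j, lo ≤ (c j : ℕ)),
    ∏ j, q ^ (c j : ℕ) / (1 - q ^ (c j : ℕ))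

/-- Complete homogeneous symmetric function `h_m` of the variables
`x lo, x (lo+1), ..., x n`. -/
def hSum {R : Type*} [CommRing R] (x : ℕ → R) (lo n m : ℕ) : R :=
  ∑ c ∈ Finset.univ.filter (fun c : Fin m → Fin (n + 1) =>
      (∀ j k : Fin m, j ≤ k → c j ≤ c k) ∧ ∀ j, lo ≤ (c j : ℕ)),
    ∏ j, x (c j : ℕ)
lemma qfac_zero (q : F) : qfac q 0 = 1 := Finset.prod_range_zero _

lemma qfac_succ (q : F) (n : ℕ) : qfac q (n + 1) = qfac q n * (1 - q ^ (n + 1)) :=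
  Finset.prod_range_succ _ _

lemma one_sub_ne (q : F) (hq : ∀ i : ℕ, 1 ≤ i → q ^ i ≠ 1) (k : ℕ) :
    (1 : F) - q ^ (k + 1) ≠ 0 :=
  sub_ne_zero.mpr (Ne.symm (hq (k + 1) (by omega)))

lemma qfac_ne_zero (q : F) (hq : ∀ i : ℕ, 1 ≤ i → q ^ i ≠ 1) (n : ℕ) : qfac q n ≠ 0 := by
  induction n with
  | zero => simp [qfac_zero]
  | succ m ih => rw [qfac_succ]; exact mul_ne_zero ih (one_sub_ne q hq m)

lemma qbinom_self (q : F) (hq : ∀ i : ℕ, 1 ≤ i → q ^ i ≠ 1) (l : ℕ) : qbinom q l l = 1 := by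
  unfold qbinom
  rw [Nat.sub_self, qfac_zero, mul_one, div_self (qfac_ne_zero q hq l)]

lemma qbinom_zero (q : F) (hq : ∀ i : ℕ, 1 ≤ i → q ^ i ≠ 1) (m : ℕ) : qbinom q m 0 = 1 := by
  unfold qbinom
  rw [Nat.sub_zero, qfac_zero, one_mul, div_self (qfac_ne_zero q hq m)]

lemma qbinom_pascal (q : F) (hq : ∀ i : ℕ, 1 ≤ i → q ^ i ≠ 1) (a l : ℕ) :
    qbinom q (a + l + 2) (l + 1)
      = qbinom q (a + l + 1) (l + 1) + q ^ (a + 1) * qbinom q (a + l + 1) l := by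
  unfold qbinom
  have h1 : a + l + 2 - (l + 1) = a + 1 := by omega
  have h2 : a + l + 1 - (l + 1) = a := by omega
  have h3 : a + l + 1 - l = a + 1 := by omega
  rw [h1, h2, h3]
  have e1 : qfac q (a + l + 2) = qfac q (a + l + 1) * (1 - q ^ (a + l + 2)) := by
    have := qfac_succ q (a + l + 1); rwa [show a + l + 1 + 1 = a + l + 2 by omega] at this
  rw [e1, qfac_succ q l, qfac_succ q a]
  have nl := qfac_ne_zero q hq l
  have na := qfac_ne_zero q hq a
  have n1 := one_sub_ne q hq l
  have n2 := one_sub_ne q hq a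
  field_simp
  ring_nf

lemma fu_lascoux_key (q : F) (hq : ∀ i : ℕ, 1 ≤ i → q ^ i ≠ 1) :
    ∀ n l : ℕ, (1 : F) / qfac q n
      = ∑ i ∈ Finset.range (n + 1),
          1 / qfac q i * qbinom q (n - i + l) l * q ^ ((l + 1) * i) := by
  intro n
  induction n with
  | zero =>
    intro l
    rw [Finset.sum_range_one]
    simp [qfac_zero, qbinom_self q hq]
  | succ n ihn =>
    intro l
    induction l with
    | zero =>
      rw [Finset.sum_range_succ]
      have h1 : ∑ i ∈ Finset.range (n + 1),
            1 / qfac q i * qbinom q (n + 1 - i + 0) 0 * q ^ ((0 + 1) * i)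
          = ∑ i ∈ Finset.range (n + 1),
            1 / qfac q i * qbinom q (n - i + 0) 0 * q ^ ((0 + 1) * i) := by
        refine Finset.sum_congr rfl fun i hi => ?_
        rw [qbinom_zero q hq, qbinom_zero q hq]
      rw [h1, ← ihn 0, Nat.sub_self, qbinom_zero q hq]
      have na := qfac_ne_zero q hq n
      have n2 := one_sub_ne q hq n
      rw [qfac_succ]
      field_simp
      ring
    | succ l ihl =>
      rw [Finset.sum_range_succ]
      have hpeel : 1 / qfac q (n + 1) * qbinom q (n + 1 - (n + 1) + (l + 1)) (l + 1)
            * q ^ ((l + 1 + 1) * (n + 1))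
          = 1 / qfac q (n + 1) * q ^ ((l + 1 + 1) * (n + 1)) := by
        rw [Nat.sub_self, Nat.zero_add, qbinom_self q hq, mul_one]
      rw [hpeel]
      have hmain : ∑ i ∈ Finset.range (n + 1),
            1 / qfac q i * qbinom q (n + 1 - i + (l + 1)) (l + 1) * q ^ ((l + 1 + 1) * i)
          = (∑ i ∈ Finset.range (n + 1),
              1 / qfac q i * qbinom q (n - i + (l + 1)) (l + 1) * q ^ ((l + 1 + 1) * i))
            + q ^ (n + 1) * ∑ i ∈ Finset.range (n + 1),
              1 / qfac q i * qbinom q (n + 1 - i + l) l * q ^ ((l + 1) * i) := by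
        rw [Finset.mul_sum, ← Finset.sum_add_distrib]
        refine Finset.sum_congr rfl fun i hi => ?_
        have hin : i ≤ n := by
          have := Finset.mem_range.mp hi; omega
        have e1 : n + 1 - i + (l + 1) = (n - i) + l + 2 := by omega
        have e2 : n - i + (l + 1) = (n - i) + l + 1 := by omega
        have e3 : n + 1 - i + l = (n - i) + l + 1 := by omega
        rw [e1, e2, e3, qbinom_pascal q hq (n - i) l]
        rw [show (l + 1 + 1) * i = (l + 1) * i + i from by ring, pow_add]
        have h6 : q ^ (n - i + 1) * q ^ i = q ^ (n + 1) := by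
          rw [← pow_add]; congr 1; omega
        linear_combination (1 / qfac q i * qbinom q (n - i + l + 1) l * q ^ ((l + 1) * i)) * h6
      rw [hmain, ← ihn (l + 1)]
      have hihl : ∑ i ∈ Finset.range (n + 1),
            1 / qfac q i * qbinom q (n + 1 - i + l) l * q ^ ((l + 1) * i)
          = 1 / qfac q (n + 1)
            - 1 / qfac q (n + 1) * q ^ ((l + 1) * (n + 1)) := by
        have h := ihl
        rw [Finset.sum_range_succ, Nat.sub_self, Nat.zero_add, qbinom_self q hq, mul_one] at h
        linear_combination -h
      rw [hihl]
      rw [show (l + 1 + 1) * (n + 1) = (l + 1) * (n + 1) + (n + 1) from by ring, pow_add]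
      have na := qfac_ne_zero q hq n
      have nn1 := qfac_ne_zero q hq (n + 1)
      have n2 := one_sub_ne q hq n
      rw [qfac_succ q n]
      rw [qfac_succ q n] at nn1
      field_simp
      ring

theorem fu_lascoux_eq10 (q : F) (n l : ℕ) (hq : ∀ i : ℕ, 1 ≤ i → q ^ i ≠ 1) :
    1 / qfac q n
      = ∑ i ∈ Finset.range (n + 1),
          1 / qfac q i * qbinom q (n - i + l) l * q ^ ((l + 1) * i) := by
  exact fu_lascoux_key q hq n l
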